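/- arXiv:1505.06970 — 8 statements merged into one kernel-verified Lean document; each statement's English description precedes it below -/
import Mathlib

section
/- Let p be a positive integer and y, Y units modulo p. Define f(m) = [x + m·y]_p and F(m) = [X + m·Y]_p for fixed integers x, X. If there exists C with 2 ≤ C ≤ p-2 such that for all m, f(m) < C if and only if F(m) < C, then Y ≡ y (mod p) or Y ≡ -y (mod p). -/
-- count of t with t.val < C and (t+u).val < C
lemma count_aux (p C : ℕ) [NeZero p] (hCp : C ≤ p) (u : ZMod p) :
    (Finset.univ.filter (fun t : ZMod p => t.val < C ∧ (t + u).val < C)).card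
      = (C - u.val) + (C - (p - u.val)) := by
  set k := u.val with hk
  have hkp : k < p := u.val_lt
  have h1 : (Finset.univ.filter (fun t : ZMod p => t.val < C ∧ (t + u).val < C)).card
      = ((Finset.range p).filter (fun v => v < C ∧ (v + k) % p < C)).card := by
    apply Finset.card_bij (fun t _ => t.val)
    · intro t ht
      simp only [Finset.mem_filter, Finset.mem_univ, true_and] at ht
      simp only [Finset.mem_filter, Finset.mem_range]
      refine ⟨t.val_lt, ht.1, ?_⟩
      rw [← ZMod.val_add]
      exact ht.2
    · intro a _ b _ h
      exact ZMod.val_injective p h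
    · intro v hv
      simp only [Finset.mem_filter, Finset.mem_range] at hv
      refine ⟨(v : ZMod p), ?_, ?_⟩
      · simp only [Finset.mem_filter, Finset.mem_univ, true_and]
        rw [ZMod.val_add, ZMod.val_cast_of_lt hv.1]
        exact hv.2
      · exact ZMod.val_cast_of_lt hv.1
  rw [h1]
  have h2 : ((Finset.range p).filter (fun v => v < C ∧ (v + k) % p < C))
      = (Finset.range (C - k)) ∪ (Finset.Ico (p - k) C) := by
    ext v
    simp only [Finset.mem_filter, Finset.mem_range, Finset.mem_union, Finset.mem_Ico]
    constructor
    · rintro ⟨hvp, hvC, hmod⟩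
      rcases lt_or_ge (v + k) p with h | h
      · rw [Nat.mod_eq_of_lt h] at hmod; omega
      · rw [Nat.mod_eq_sub_mod h, Nat.mod_eq_of_lt (by omega)] at hmod; omega
    · intro h
      have hvC : v < C := by omega
      have hvp : v < p := by omega
      refine ⟨hvp, hvC, ?_⟩
      rcases lt_or_ge (v + k) p with h' | h'
      · rw [Nat.mod_eq_of_lt h']; omega
      · rw [Nat.mod_eq_sub_mod h', Nat.mod_eq_of_lt (by omega)]; omega
  rw [h2, Finset.card_union_of_disjoint, Finset.card_range, Nat.card_Ico]
  rw [Finset.disjoint_left]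
  intro v hv hv'
  simp only [Finset.mem_range] at hv
  simp only [Finset.mem_Ico] at hv'
  omega

-- affine shift bijection
lemma shift_card (p : ℕ) [NeZero p] (a b : ZMod p) (hb : IsUnit b)
    (P : ZMod p → Prop) [DecidablePred P] :
    (Finset.univ.filter fun z : ZMod p => P (a + z * b)).card
      = (Finset.univ.filter P).card := by
  obtain ⟨c, hc⟩ := hb.exists_right_inv
  apply Finset.card_bij' (fun z _ => a + z * b) (fun t _ => (t - a) * c)
  · intro z hz
    simp only [Finset.mem_filter, Finset.mem_univ, true_and] at hz ⊢
    exact hz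
  · intro t ht
    simp only [Finset.mem_filter, Finset.mem_univ, true_and] at ht ⊢
    have : a + (t - a) * c * b = t := by
      have : c * b = 1 := by rw [mul_comm]; exact hc
      rw [mul_assoc, this]; ring
    rw [this]; exact ht
  · intro z _
    have : c * b = 1 := by rw [mul_comm]; exact hc
    rw [add_sub_cancel_left, mul_assoc, hc, mul_one]
  · intro t _
    have h1 : c * b = 1 := by rw [mul_comm]; exact hc
    rw [mul_assoc, h1]; ring




/-- Lemma (countingalot): if `f m = [x + m·y]_p`, `F m = [X + m·Y]_p` with `y, Y`
units mod `p`, and `f m < C ↔ F m < C` for all `m`, for some `2 ≤ C ≤ p - 2`,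
then `Y ≡ ± y (mod p)`. -/
theorem stmt_2 (p : ℕ) (hp : 0 < p) (x X y Y : ℤ)
    (hy : IsUnit ((y : ZMod p))) (hY : IsUnit ((Y : ZMod p)))
    (C : ℕ) (hC : 2 ≤ C) (hC' : C ≤ p - 2)
    (hiff : ∀ m : ℤ, ((x + m * y) % (p : ℤ) < (C : ℤ) ↔ (X + m * Y) % (p : ℤ) < (C : ℤ))) :
    Y ≡ y [ZMOD p] ∨ Y ≡ -y [ZMOD p] := by
  haveI : NeZero p := ⟨hp.ne'⟩
  have hp4 : 4 ≤ p := by omega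
  haveI : Fact (1 < p) := ⟨by omega⟩
  -- the set S
  have hval : ∀ m : ℤ, (((m : ZMod p)).val : ℤ) = m % p := fun m => ZMod.val_intCast m
  have hSiff : ∀ z : ZMod p, ((x : ZMod p) + z * y).val < C ↔ ((X : ZMod p) + z * Y).val < C := by
    intro z
    obtain ⟨m, rfl⟩ := ZMod.intCast_surjective (n := p) z
    have e1 : ((x : ZMod p) + (m : ZMod p) * y) = ((x + m * y : ℤ) : ZMod p) := by push_cast; ring
    have e2 : ((X : ZMod p) + (m : ZMod p) * Y) = ((X + m * Y : ℤ) : ZMod p) := by push_cast; ring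
    rw [e1, e2]
    have v1 := hval (x + m * y)
    have v2 := hval (X + m * Y)
    constructor
    · intro h
      have : (x + m * y) % p < (C:ℤ) := by rw [← v1]; exact_mod_cast h
      have := (hiff m).mp this
      rw [← v2] at this; exact_mod_cast this
    · intro h
      have : (X + m * Y) % p < (C:ℤ) := by rw [← v2]; exact_mod_cast h
      have := (hiff m).mpr this
      rw [← v1] at this; exact_mod_cast this
  -- left inverses
  obtain ⟨d, hd⟩ := hy.exists_left_inv   -- d * y = 1
  -- the double-membership count, expressed two ways
  have key1 : (Finset.univ.filter fun z : ZMod p =>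
      ((x : ZMod p) + z * y).val < C ∧ ((x : ZMod p) + (z + d) * y).val < C).card
      = C - 1 := by
    have e : ∀ z : ZMod p, ((x : ZMod p) + (z + d) * y) = ((x : ZMod p) + z * y) + 1 := by
      intro z; rw [add_mul, hd]; ring
    simp_rw [e]
    rw [shift_card p (x : ZMod p) (y : ZMod p) hy
      (fun t => t.val < C ∧ (t + 1).val < C)]
    rw [count_aux p C (by omega) 1, ZMod.val_one]
    omega
  have key2 : (Finset.univ.filter fun z : ZMod p =>
      ((x : ZMod p) + z * y).val < C ∧ ((x : ZMod p) + (z + d) * y).val < C).card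
      = (C - (d * Y).val) + (C - (p - (d * Y).val)) := by
    have e : ∀ z : ZMod p,
        ((((x : ZMod p) + z * y).val < C ∧ ((x : ZMod p) + (z + d) * y).val < C) ↔
         (((X : ZMod p) + z * Y).val < C ∧ (((X : ZMod p) + z * Y) + d * Y).val < C)) := by
      intro z
      rw [hSiff z, hSiff (z + d)]
      have : (X : ZMod p) + (z + d) * Y = ((X : ZMod p) + z * Y) + d * Y := by ring
      rw [this]
    simp_rw [e]
    rw [shift_card p (X : ZMod p) (Y : ZMod p) hY
      (fun t => t.val < C ∧ (t + d * Y).val < C)]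
    exact count_aux p C (by omega) (d * Y)
  set k := (d * Y).val with hkdef
  have hkp : k < p := (d * Y).val_lt
  have hk : k = 1 ∨ k = p - 1 := by
    rw [key2] at key1; omega
  have hcast : ((k : ℕ) : ZMod p) = d * Y := by
    rw [hkdef, ZMod.natCast_val, ZMod.cast_id]
  rcases hk with hk | hk
  · left
    rw [Int.ModEq] at *
    have hdy : d * Y = 1 := by rw [← hcast, hk, Nat.cast_one]
    have : (Y : ZMod p) = (y : ZMod p) := by
      calc (Y : ZMod p) = (d * y) * Y := by rw [hd, one_mul]
        _ = (d * Y) * y := by ring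
        _ = y := by rw [hdy, one_mul]
    exact (ZMod.intCast_eq_intCast_iff _ _ _).mp this
  · right
    have hdy : d * Y = -1 := by
      rw [← hcast, hk]
      have : ((p - 1 : ℕ) : ZMod p) = (p : ZMod p) - 1 := by
        push_cast [Nat.cast_sub (by omega : 1 ≤ p)]; ring
      rw [this, ZMod.natCast_self, zero_sub]
    have : (Y : ZMod p) = ((-y : ℤ) : ZMod p) := by
      push_cast
      calc (Y : ZMod p) = (d * y) * Y := by rw [hd, one_mul]
        _ = (d * Y) * y := by ring
        _ = -y := by rw [hdy]; ring
    exact (ZMod.intCast_eq_intCast_iff _ _ _).mp this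
end

section
/- Let p > q > 0 be coprime integers, and let f : ℤ/pℤ → ℤ satisfy f(0) = 0 and f(n+1) = f(n) + p - 1 - 2·[s + n·q]_p, where 2s ≡ q - 1 (mod p). Then f(n) ≡ -n²·q (mod p) for all n. -/
/-- Let `p > q > 0` be coprime, `2s ≡ q - 1 (mod p)`, and let `f` satisfy
`f 0 = 0` and `f (n+1) = f n + p - 1 - 2·[s + n·q]_p`. Then `f n ≡ -n²·q (mod p)`. -/
theorem stmt_3 (p q s : ℤ) (hq : 0 < q) (hqp : q < p) (hcop : IsCoprime p q)
    (hs : 2 * s ≡ q - 1 [ZMOD p])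
    (f : ℕ → ℤ) (hf0 : f 0 = 0)
    (hfrec : ∀ n : ℕ, f (n + 1) = f n + p - 1 - 2 * ((s + n * q) % p)) :
    ∀ n : ℕ, f n ≡ -(n : ℤ) ^ 2 * q [ZMOD p] := by
  intro n
  induction n with
  | zero => simp [hf0]
  | succ n ih =>
    obtain ⟨a, ha⟩ := Int.ModEq.dvd ih
    obtain ⟨b, hb⟩ := Int.ModEq.dvd hs
    rw [Int.modEq_iff_dvd, hfrec n, Int.emod_def]
    refine ⟨a - 1 - b - 2 * ((s + n * q) / p), ?_⟩
    push_cast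
    nlinarith [ha, hb]
end

section
/- Let p > q > 0 be coprime and define d-increments via Δ(i) = (p - 1 - 2·[i]_p)/p, i.e., d(i+q) - d(i) = (p-1-2[i]_p)/p for a function d : ℤ/pℤ → ℚ. If s ∈ ℤ/pℤ satisfies d(s+q) = d(s-q) under the conjugation symmetry fixing s, then 2s ≡ q - 1 (mod p). In particular, if p is odd there is exactly one such s in ℤ/pℤ, and if p is even there are exactly two, namely (q-1)/2 and (p+q-1)/2. -/
/-!
Adding the increments at `s - q` and at `s` telescopes to `d (s + q) - d (s - q)`, so the
symmetry forces `[s]_p + [s - q]_p = p - 1`, which read in `ℤ/pℤ` is `2s - q = -1`.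
Halving is unique in `ℤ/pℤ` when `p` is odd, and determined only up to `p/2` when `p` is even;
coprimality then makes `q` odd, so `(q - 1)/2` is one solution.
-/

namespace ZMod

variable {p : ℕ}

theorem add_eq_neg_one_of_val_add_val_eq [NeZero p] {s t : ZMod p}
    (h : s.val + t.val = p - 1) : s + t = -1 := by
  have h' := congrArg (Nat.cast : ℕ → ZMod p) h
  push_cast [Nat.cast_sub NeZero.one_le, natCast_zmod_val] at h'
  simpa using h'

theorem two_mul_eq_sub_one_of_apply_add_eq_apply_sub [NeZero p] {a : ZMod p} {d : ZMod p → ℚ}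
    (hd : ∀ i, d (i + a) - d i = ((p : ℚ) - 1 - 2 * i.val) / p) {s : ZMod p}
    (hs : d (s + a) = d (s - a)) : 2 * s = a - 1 := by
  have hsum : ((p : ℚ) - 1 - 2 * s.val) / p + ((p : ℚ) - 1 - 2 * (s - a).val) / p = 0 := by
    have hstep := hd (s - a)
    rw [sub_add_cancel] at hstep
    rw [← hd, ← hstep, hs]
    ring
  have hp : (p : ℚ) ≠ 0 := NeZero.ne _
  have hval : s.val + (s - a).val = p - 1 := by
    rw [← add_div, div_eq_zero_iff, or_iff_left hp] at hsum
    have : ((s.val + (s - a).val : ℕ) : ℚ) = ((p - 1 : ℕ) : ℚ) := by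
      push_cast [Nat.cast_sub NeZero.one_le]
      linarith
    exact_mod_cast this
  linear_combination add_eq_neg_one_of_val_add_val_eq hval

theorem existsUnique_two_mul_eq (hp : Odd p) (c : ZMod p) : ∃! s : ZMod p, 2 * s = c := by
  have h2 : IsUnit (2 : ZMod p) := by
    exact_mod_cast (isUnit_iff_coprime 2 p).mpr (Nat.coprime_two_left.mpr hp)
  exact (IsUnit.isUnit_iff_mulLeft_bijective.mp h2).existsUnique c

variable {m : ℕ} (hm : 2 * m = p)
include hm

theorem natCast_half_ne_zero (hm0 : m ≠ 0) : (m : ZMod p) ≠ 0 := by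
  rw [Ne, natCast_eq_zero_iff]
  exact Nat.not_dvd_of_pos_of_lt (Nat.pos_of_ne_zero hm0) (by omega)

theorem two_mul_eq_zero_iff [NeZero p] {t : ZMod p} : 2 * t = 0 ↔ t = 0 ∨ t = m := by
  constructor
  · intro ht
    have hdvd : 2 * m ∣ 2 * t.val := by
      rw [hm, ← natCast_eq_zero_iff]
      push_cast [natCast_zmod_val]
      exact ht
    have hlt : t.val < 2 * m := hm ▸ val_lt t
    obtain ⟨c, hc⟩ := Nat.dvd_of_mul_dvd_mul_left two_pos hdvd
    have hc2 : c < 2 := by nlinarith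
    rw [← natCast_zmod_val t, hc]
    interval_cases c <;> simp
  · rintro (rfl | rfl)
    · simp
    · exact_mod_cast (natCast_eq_zero_iff _ p).mpr hm.symm.dvd

theorem setOf_two_mul_eq_two_mul [NeZero p] (a : ZMod p) :
    {s : ZMod p | 2 * s = 2 * a} = {a, a + m} := by
  ext s
  rw [Set.mem_ofPred_eq, ← sub_eq_zero, ← mul_sub, two_mul_eq_zero_iff hm, sub_eq_zero,
    sub_eq_iff_eq_add']
  rfl

end ZMod

open ZMod in
theorem stmt_9_general (p q : ℕ) (hqp : q < p) (hcop : Nat.Coprime p q)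
    (d : ZMod p → ℚ)
    (hd : ∀ i : ZMod p, d (i + (q : ZMod p)) - d i =
      ((p : ℚ) - 1 - 2 * (i.val : ℚ)) / (p : ℚ)) :
    (∀ s : ZMod p, d (s + (q : ZMod p)) = d (s - (q : ZMod p)) →
      2 * s = (q : ZMod p) - 1) ∧
    (Odd p → ∃! s : ZMod p, 2 * s = (q : ZMod p) - 1) ∧
    (Even p →
      {s : ZMod p | 2 * s = (q : ZMod p) - 1} =
        {(((q - 1) / 2 : ℕ) : ZMod p), (((p + q - 1) / 2 : ℕ) : ZMod p)} ∧
      (((q - 1) / 2 : ℕ) : ZMod p) ≠ (((p + q - 1) / 2 : ℕ) : ZMod p)) := by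
  have : NeZero p := ⟨(Nat.zero_le q).trans_lt hqp |>.ne'⟩
  refine ⟨fun s => two_mul_eq_sub_one_of_apply_add_eq_apply_sub hd,
    fun hodd => existsUnique_two_mul_eq hodd _, fun ⟨m, hm⟩ => ?_⟩
  obtain ⟨k, rfl⟩ : Odd q := Nat.Coprime.odd_of_left (hcop.coprime_dvd_left (by omega))
  have hm2 : 2 * m = p := by omega
  rw [show (2 * k + 1 - 1) / 2 = k by omega, show (p + (2 * k + 1) - 1) / 2 = k + m by omega,
    show ((2 * k + 1 : ℕ) : ZMod p) - 1 = 2 * k by push_cast; ring, Nat.cast_add]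
  exact ⟨setOf_two_mul_eq_two_mul hm2 _, by simpa using natCast_half_ne_zero hm2 (by omega)⟩

/-- Let `p > q > 0` be coprime and `d : ℤ/pℤ → ℚ` satisfy
`d (i+q) - d i = (p - 1 - 2·[i]_p)/p`. If `s` satisfies the symmetry
`d (s+q) = d (s-q)`, then `2s ≡ q - 1 (mod p)`. Moreover, if `p` is odd there
is exactly one such `s`, and if `p` is even there are exactly two, namely
`(q-1)/2` and `(p+q-1)/2`. -/
theorem stmt_9 (p q : ℕ) (hq : 0 < q) (hqp : q < p) (hcop : Nat.Coprime p q)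
    (d : ZMod p → ℚ)
    (hd : ∀ i : ZMod p, d (i + (q : ZMod p)) - d i =
      ((p : ℚ) - 1 - 2 * (i.val : ℚ)) / (p : ℚ)) :
    (∀ s : ZMod p, d (s + (q : ZMod p)) = d (s - (q : ZMod p)) →
      2 * s = (q : ZMod p) - 1) ∧
    (Odd p → ∃! s : ZMod p, 2 * s = (q : ZMod p) - 1) ∧
    (Even p →
      {s : ZMod p | 2 * s = (q : ZMod p) - 1} =
        {(((q - 1) / 2 : ℕ) : ZMod p), (((p + q - 1) / 2 : ℕ) : ZMod p)} ∧
      (((q - 1) / 2 : ℕ) : ZMod p) ≠ (((p + q - 1) / 2 : ℕ) : ZMod p)) :=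
  stmt_9_general p q hqp hcop d hd
end

section
/- Let p be a positive integer, q a unit mod p, u a unit mod p, and s₁, s₂ integers. Suppose that for all m ∈ ℤ/pℤ, [s₁+m]_p + [s₂+(m+q)u]_p = [s₂+mu]_p + [s₁+m+uq]_p. Then for all m, [s₁+m]_p < p - [uq]_p if and only if [s₂+mu]_p < p - [uq]_p. -/
lemma aux_mod_add (p : ℕ) (hp : 0 < p) (x y : ℤ) (hx : 0 ≤ x) (hx' : x < p)
    (hy : 0 ≤ y) (hy' : y < p) :
    ((x + y) % (p : ℤ) = x + y ∧ x + y < p) ∨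
      ((x + y) % (p : ℤ) = x + y - p ∧ (p : ℤ) ≤ x + y) := by
  rcases lt_or_ge (x + y) (p : ℤ) with h | h
  · exact Or.inl ⟨Int.emod_eq_of_lt (by omega) h, h⟩
  · refine Or.inr ⟨?_, h⟩
    have h5 : (x + y - p) % (p:ℤ) = (x + y) % (p:ℤ) := by simp [Int.sub_emod]
    have h6 : (x + y - p) % (p:ℤ) = x + y - p :=
      Int.emod_eq_of_lt (by omega) (by omega)
    omega

lemma main_aux (p : ℕ) (hp : 0 < p) (A B C : ℤ)
    (hA1 : 0 ≤ A) (hA2 : A < p) (hB1 : 0 ≤ B) (hB2 : B < p)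
    (hC1 : 0 ≤ C) (hC2 : C < p)
    (h : A + (B + C) % (p : ℤ) = B + (A + C) % (p : ℤ)) :
    A < (p : ℤ) - C ↔ B < (p : ℤ) - C := by
  rcases aux_mod_add p hp B C hB1 hB2 hC1 hC2 with ⟨h1, h1'⟩ | ⟨h1, h1'⟩ <;>
    rcases aux_mod_add p hp A C hA1 hA2 hC1 hC2 with ⟨h2, h2'⟩ | ⟨h2, h2'⟩ <;> omega

/-- Key identity implies key equivalence: if for all `m`,
`[s₁+m]_p + [s₂+(m+q)u]_p = [s₂+mu]_p + [s₁+m+uq]_p`, then for all `m`,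
`[s₁+m]_p < p - [uq]_p ↔ [s₂+mu]_p < p - [uq]_p`. -/
theorem stmt_10 (p : ℕ) (hp : 0 < p) (q u s₁ s₂ : ℤ)
    (hq : IsUnit ((q : ZMod p))) (hu : IsUnit ((u : ZMod p)))
    (hkey : ∀ m : ℤ, (s₁ + m) % (p : ℤ) + (s₂ + (m + q) * u) % (p : ℤ) =
      (s₂ + m * u) % (p : ℤ) + (s₁ + m + u * q) % (p : ℤ)) :
    ∀ m : ℤ, ((s₁ + m) % (p : ℤ) < (p : ℤ) - (u * q) % (p : ℤ) ↔
      (s₂ + m * u) % (p : ℤ) < (p : ℤ) - (u * q) % (p : ℤ)) := by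
  intro m
  have hp' : (0 : ℤ) < p := by exact_mod_cast hp
  have h := hkey m
  have hA1 : 0 ≤ (s₁ + m) % (p : ℤ) := Int.emod_nonneg _ (by omega)
  have hA2 : (s₁ + m) % (p : ℤ) < p := Int.emod_lt_of_pos _ hp'
  have hB1 : 0 ≤ (s₂ + m * u) % (p : ℤ) := Int.emod_nonneg _ (by omega)
  have hB2 : (s₂ + m * u) % (p : ℤ) < p := Int.emod_lt_of_pos _ hp'
  have hC1 : 0 ≤ (u * q) % (p : ℤ) := Int.emod_nonneg _ (by omega)
  have hC2 : (u * q) % (p : ℤ) < p := Int.emod_lt_of_pos _ hp'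
  have e1 : (s₂ + (m + q) * u) % (p : ℤ) =
      ((s₂ + m * u) % (p : ℤ) + (u * q) % (p : ℤ)) % (p : ℤ) := by
    rw [← Int.add_emod]
    ring_nf
  have e2 : (s₁ + m + u * q) % (p : ℤ) =
      ((s₁ + m) % (p : ℤ) + (u * q) % (p : ℤ)) % (p : ℤ) := by
    rw [← Int.add_emod]
  rw [e1, e2] at h
  exact main_aux p hp _ _ _ hA1 hA2 hB1 hB2 hC1 hC2 h
end

section
/- Let p ≥ 5, let q and u be units mod p with uq not ≡ ±1 and u not ≡ ±1 (mod p), and suppose 2 ≤ [uq]_p ≤ p - 2 is replaced by C = p - [uq]_p satisfying 2 ≤ C ≤ p-2. Then for any integers s₁, s₂, there exists m such that exactly one of [s₁+m]_p < C and [s₂+mu]_p < C holds. -/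
/-!
If no such `m` exists, the affine bijection `x ↦ u x + c` of `ZMod p`, with `c = s₂ - s₁ u`,
maps the interval `I = [0, C)` into itself. It sends the `C - 1` pairs `(j, j + 1)` inside `I`
to pairs `(y, y + u)` inside `I`, so at least `C - 1` elements `y ∈ I` have `y + u ∈ I`. But for
`a = [u]_p` with `2 ≤ a ≤ p - 2`, the translate `I + a` meets `I` in at most
`(C - a)⁺ + (C - (p - a))⁺ ≤ C - 2` points.
-/

open Finset

namespace ZMod

variable {p : ℕ} [NeZero p]

theorem card_filter_val_lt_and_val_add_lt_le (u : ZMod p) (C : ℕ) :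
    #{x : ZMod p | x.val < C ∧ (x + u).val < C} ≤ (C - u.val) + (C - (p - u.val)) := by
  calc #{x : ZMod p | x.val < C ∧ (x + u).val < C}
      ≤ #(range (C - u.val) ∪ Ico (p - u.val) C) := by
        refine card_le_card_of_injOn val (fun x hx => ?_) (val_injective p).injOn
        simp only [coe_filter, Set.mem_ofPred_eq, mem_univ, true_and] at hx
        have hadd := val_add x u
        have := x.val_lt
        have := u.val_lt
        simp only [coe_union, coe_range, coe_Ico, Set.mem_union, Set.mem_Iio, Set.mem_Ico]
        rcases lt_or_ge (x.val + u.val) p with hlt | hge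
        · rw [Nat.mod_eq_of_lt hlt] at hadd
          omega
        · rw [Nat.mod_eq_sub_mod hge, Nat.mod_eq_of_lt (by omega)] at hadd
          omega
    _ ≤ #(range (C - u.val)) + #(Ico (p - u.val) C) := card_union_le _ _
    _ = (C - u.val) + (C - (p - u.val)) := by rw [card_range, Nat.card_Ico]

theorem le_card_filter_val_lt_and_val_add_lt_of_mapsTo {u : ZMod p} (hu : IsUnit u) (c : ZMod p)
    {C : ℕ} (hCp : C ≤ p)
    (hmaps : Set.MapsTo (fun x => u * x + c) {x | x.val < C} {x | x.val < C}) :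
    C - 1 ≤ #{x : ZMod p | x.val < C ∧ (x + u).val < C} := by
  have hval : ∀ j < C, ((j : ℕ) : ZMod p).val = j := fun j hj => val_cast_of_lt (by omega)
  have hcard := card_le_card_of_injOn (fun j : ℕ => u * j + c) (s := range (C - 1))
    (t := {x : ZMod p | x.val < C ∧ (x + u).val < C}) ?_ ?_
  · simpa using hcard
  · intro j hj
    simp only [coe_range, Set.mem_Iio] at hj
    have hshift : u * ((j + 1 : ℕ) : ZMod p) + c = u * j + c + u := by push_cast; ring
    simp only [coe_filter, mem_univ, true_and, Set.mem_ofPred_eq]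
    refine ⟨hmaps (x := (j : ZMod p)) ?_, hshift ▸ hmaps (x := ((j + 1 : ℕ) : ZMod p)) ?_⟩
    · simp only [Set.mem_ofPred_eq, hval j (by omega)]; omega
    · simp only [Set.mem_ofPred_eq, hval (j + 1) (by omega)]; omega
  · intro j hj j' hj' heq
    simp only [coe_range, Set.mem_Iio] at hj hj'
    have := congrArg val (hu.mul_left_cancel (add_right_cancel heq))
    rwa [hval j (by omega), hval j' (by omega)] at this

theorem not_mapsTo_mul_add_setOf_val_lt {u : ZMod p} (hu : IsUnit u) (hu1 : u ≠ 1)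
    (hu1' : u ≠ -1) (c : ZMod p) {C : ℕ} (hC2 : 2 ≤ C) (hCp : C + 2 ≤ p) :
    ¬ Set.MapsTo (fun x => u * x + c) {x | x.val < C} {x | x.val < C} := by
  intro hmaps
  have : Fact (1 < p) := ⟨by omega⟩
  have hlow := le_card_filter_val_lt_and_val_add_lt_of_mapsTo hu c (by omega) hmaps
  have hup := card_filter_val_lt_and_val_add_lt_le u C
  have hval0 : u.val ≠ 0 := fun h => hu.ne_zero ((val_eq_zero u).mp h)
  have hval1 : u.val ≠ 1 := fun h => hu1 (val_injective p (h.trans (val_one p).symm))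
  have hval1' : u.val ≠ p - 1 := fun h => hu1' <| by
    rw [← natCast_zmod_val u, h, Nat.cast_sub (by omega), natCast_self, Nat.cast_one, zero_sub]
  have := u.val_lt
  omega

end ZMod

theorem stmt_11_general (p : ℕ) (u : ℤ)
    (hu : IsUnit ((u : ZMod p)))
    (hu1 : ¬ u ≡ 1 [ZMOD p]) (hu1' : ¬ u ≡ -1 [ZMOD p])
    (C : ℤ)
    (hC2 : 2 ≤ C) (hC2' : C ≤ (p : ℤ) - 2) :
    ∀ s₁ s₂ : ℤ, ∃ m : ℤ,
      Xor' ((s₁ + m) % (p : ℤ) < C) ((s₂ + m * u) % (p : ℤ) < C) := by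
  intro s₁ s₂
  by_contra! h
  have : NeZero p := ⟨by omega⟩
  lift C to ℕ using (by omega)
  have hval_iff : ∀ m : ℤ,
      ((s₁ + m : ℤ) : ZMod p).val < C ↔ ((s₂ + m * u : ℤ) : ZMod p).val < C := by
    intro m
    have := h m
    rw [← ZMod.val_intCast, ← ZMod.val_intCast] at this
    exact_mod_cast (not_xor _ _).mp this
  have hu_ne_one : (u : ZMod p) ≠ 1 := fun h1 =>
    hu1 ((ZMod.intCast_eq_intCast_iff _ _ _).mp (by simpa using h1))
  have hu_ne_neg_one : (u : ZMod p) ≠ -1 := fun h1 =>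
    hu1' ((ZMod.intCast_eq_intCast_iff _ _ _).mp (by simpa using h1))
  apply ZMod.not_mapsTo_mul_add_setOf_val_lt hu hu_ne_one hu_ne_neg_one ((s₂ - s₁ * u : ℤ) : ZMod p)
    (C := C) (by omega) (by omega)
  intro x hx
  have hfst : ((s₁ + (x.val - s₁) : ℤ) : ZMod p) = x := by push_cast; simp
  have hsnd : ((s₂ + (x.val - s₁) * u : ℤ) : ZMod p) = u * x + ((s₂ - s₁ * u : ℤ) : ZMod p) := by
    push_cast
    rw [ZMod.natCast_zmod_val]
    ring
  have := hval_iff (x.val - s₁)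
  rw [hfst, hsnd] at this
  exact this.mp hx

/-- If `u ≢ ±1` and `uq ≢ ±1 (mod p)` and `C = p - [uq]_p` satisfies
`2 ≤ C ≤ p - 2`, then for any `s₁, s₂` there is `m` for which exactly one of
`[s₁+m]_p < C` and `[s₂+mu]_p < C` holds. -/
theorem stmt_11 (p : ℕ) (hp : 5 ≤ p) (q u : ℤ)
    (hq : IsUnit ((q : ZMod p))) (hu : IsUnit ((u : ZMod p)))
    (hu1 : ¬ u ≡ 1 [ZMOD p]) (hu1' : ¬ u ≡ -1 [ZMOD p])
    (huq1 : ¬ u * q ≡ 1 [ZMOD p]) (huq1' : ¬ u * q ≡ -1 [ZMOD p])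
    (C : ℤ) (hC : C = (p : ℤ) - (u * q) % (p : ℤ))
    (hC2 : 2 ≤ C) (hC2' : C ≤ (p : ℤ) - 2) :
    ∀ s₁ s₂ : ℤ, ∃ m : ℤ,
      Xor' ((s₁ + m) % (p : ℤ) < C) ((s₂ + m * u) % (p : ℤ) < C) :=
  stmt_11_general p u hu hu1 hu1' C hC2 hC2'
end

section
/- Let p > q > 0 be coprime and let f : ℕ → ℤ satisfy f(0) = 0 and f(n+1) = f(n) + p - 1 - 2·[s+nq]_p where s is fixed. Then f(p) = 0; i.e., f descends to a well-defined function on ℤ/pℤ. -/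
/-- Let `p > q > 0` be coprime and `f : ℕ → ℤ` satisfy `f 0 = 0` and
`f (n+1) = f n + p - 1 - 2·[s + n·q]_p`. Then `f p = 0`, so `f` descends to
`ℤ/pℤ`. -/
theorem stmt_12 (p q : ℕ) (hq : 0 < q) (hqp : q < p) (hcop : Nat.Coprime p q)
    (s : ℤ) (f : ℕ → ℤ) (hf0 : f 0 = 0)
    (hfrec : ∀ n : ℕ, f (n + 1) = f n + p - 1 - 2 * ((s + n * q) % (p : ℤ))) :
    f p = 0 := by
  have hp : 0 < p := lt_trans hq hqp
  have hpz : (0:ℤ) < (p:ℤ) := by exact_mod_cast hp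
  have key : ∀ k, f k = k * ((p:ℤ) - 1) - 2 * ∑ n ∈ Finset.range k, ((s + n * q) % (p:ℤ)) := by
    intro k
    induction k with
    | zero => simp [hf0]
    | succ k ih =>
      rw [hfrec k, Finset.sum_range_succ, ih]
      push_cast
      ring
  set T : ℕ → ℕ := fun n => ((s + n * q) % (p:ℤ)).toNat with hTdef
  have hT : ∀ n : ℕ, ((s + n * q) % (p:ℤ)) = ((T n : ℕ) : ℤ) := by
    intro n
    simp [hTdef, Int.toNat_of_nonneg (Int.emod_nonneg _ hpz.ne')]
  have hlt : ∀ n, T n < p := by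
    intro n
    have h1 := Int.emod_lt_of_pos (s + n * q) hpz
    have h2 := Int.emod_nonneg (s + n * q) hpz.ne'
    simp only [hTdef]
    omega
  have hinj : ∀ a ∈ Finset.range p, ∀ b ∈ Finset.range p, T a = T b → a = b := by
    intro a ha b hb hab
    rw [Finset.mem_range] at ha hb
    have h1 : (s + a * q) % (p:ℤ) = (s + b * q) % (p:ℤ) := by
      rw [hT a, hT b]; exact_mod_cast hab
    have hm : (a:ℤ) * q ≡ (b:ℤ) * q [ZMOD (p:ℤ)] :=
      Int.ModEq.add_left_cancel' s h1
    have hm2 : (a:ℤ) ≡ (b:ℤ) [ZMOD (p:ℤ) / Int.gcd (p:ℤ) (q:ℤ)] :=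
      Int.ModEq.cancel_right_div_gcd hpz hm
    have hg : Int.gcd (p:ℤ) (q:ℤ) = 1 := by
      simpa [Int.gcd_natCast_natCast] using hcop
    rw [hg] at hm2
    simp only [Nat.cast_one, Int.ediv_one] at hm2
    have : (a:ℤ) % p = (b:ℤ) % p := hm2
    rw [Int.emod_eq_of_lt (by positivity) (by exact_mod_cast ha),
        Int.emod_eq_of_lt (by positivity) (by exact_mod_cast hb)] at this
    exact_mod_cast this
  have him : Finset.image T (Finset.range p) = Finset.range p := by
    apply Finset.eq_of_subset_of_card_le
    · intro m hm
      obtain ⟨n, _, rfl⟩ := Finset.mem_image.mp hm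
      exact Finset.mem_range.mpr (hlt n)
    · rw [Finset.card_image_of_injOn hinj, Finset.card_range]
  have hsum : ∑ n ∈ Finset.range p, ((s + n * q) % (p:ℤ)) = ∑ m ∈ Finset.range p, (m:ℤ) := by
    calc ∑ n ∈ Finset.range p, ((s + n * q) % (p:ℤ))
        = ∑ n ∈ Finset.range p, ((T n : ℕ) : ℤ) := Finset.sum_congr rfl fun n _ => hT n
      _ = ∑ m ∈ Finset.image T (Finset.range p), (m:ℤ) := (Finset.sum_image hinj).symm
      _ = ∑ m ∈ Finset.range p, (m:ℤ) := by rw [him]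
  have hgauss : (∑ m ∈ Finset.range p, (m:ℤ)) * 2 = (p:ℤ) * ((p:ℤ) - 1) := by
    have := Finset.sum_range_id_mul_two p
    have h2 : ((∑ i ∈ Finset.range p, i) * 2 : ℕ) = ((p * (p - 1) : ℕ)) := this
    have := congrArg (Nat.cast : ℕ → ℤ) h2
    push_cast [Nat.cast_sub hp] at this
    linarith
  rw [key p, hsum]
  linarith
end

section
/- Let p be a positive integer and n ≤ -2 an integer with |n| ≤ p/2. Let H : {0,...,p-1} → {0,...,p-1} satisfy H(i) ≡ H(0) + in (mod p), and let 2 ≤ C ≤ p/2. If H(0) ≤ C - 1, then i₀ = ⌊H(0)/|n|⌋ + 1 satisfies i₀ ≤ C - 1 and H(i₀) ≥ C, so the equivalence H(i) < C ⟺ i < C fails. -/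
/-- For `n ≤ -2` with `|n| ≤ p/2`, an affine-mod-`p` map `H` on `{0,...,p-1}`,
`2 ≤ C ≤ p/2`, and `H 0 ≤ C - 1`, the index `i₀ = ⌊H 0 / |n|⌋ + 1` satisfies
`H i₀ ≥ C` and `i₀ ≤ C - 1`, violating the equivalence `H i < C ↔ i < C`. -/
theorem stmt_16 (p : ℕ) (n : ℤ) (hn2 : n ≤ -2) (hn : 2 * |n| ≤ (p : ℤ))
    (H : ℕ → ℕ) (hHlt : ∀ i < p, H i < p)
    (hHcong : ∀ i < p, (H i : ℤ) ≡ (H 0 : ℤ) + i * n [ZMOD p])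
    (C : ℕ) (hC : 2 ≤ C) (hC' : 2 * (C : ℤ) ≤ (p : ℤ))
    (hH0 : (H 0 : ℤ) ≤ (C : ℤ) - 1) :
    let i₀ : ℤ := (H 0 : ℤ) / |n| + 1
    (C : ℤ) ≤ (H i₀.toNat : ℤ) ∧ i₀ ≤ (C : ℤ) - 1 ∧
      ¬ (∀ i < p, (H i < C ↔ i < C)) := by
  intro i₀
  have hm : |n| = -n := abs_of_nonpos (by linarith)
  have hm2 : (2:ℤ) ≤ |n| := by rw [hm]; linarith
  have hH0nn : (0:ℤ) ≤ (H 0 : ℤ) := Int.natCast_nonneg _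
  set q : ℤ := (H 0 : ℤ) / |n| with hq
  have hqnn : 0 ≤ q := Int.ediv_nonneg hH0nn (by linarith)
  have hmod := Int.emod_nonneg (H 0 : ℤ) (show |n| ≠ 0 by linarith)
  have hmodlt := Int.emod_lt_of_pos (H 0 : ℤ) (show (0:ℤ) < |n| by linarith)
  have hdm := Int.mul_ediv_add_emod (H 0 : ℤ) |n|
  -- key bounds on i₀ * |n|
  have key1 : (H 0 : ℤ) < i₀ * |n| := by
    have : i₀ * |n| = |n| * q + |n| := by ring
    linarith [hdm, hmodlt]
  have key2 : i₀ * |n| ≤ (H 0 : ℤ) + |n| := by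
    have : i₀ * |n| = |n| * q + |n| := by ring
    linarith [hdm, hmod]
  -- q ≤ C - 2
  have h2q : 2 * q ≤ (C:ℤ) - 1 := by
    have : 2 * q ≤ |n| * q := by nlinarith
    linarith [hdm, hmod]
  have hiC : i₀ ≤ (C:ℤ) - 1 := by
    have : q ≤ (C:ℤ) - 2 := by omega
    simp only [i₀]; linarith
  have hi1 : (1:ℤ) ≤ i₀ := by simp only [i₀]; linarith
  have hip : i₀ < (p:ℤ) := by linarith
  have htn : ((i₀.toNat : ℤ)) = i₀ := Int.toNat_of_nonneg (by linarith)
  have hipn : i₀.toNat < p := by omega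
  have hcong := hHcong i₀.toNat hipn
  rw [htn] at hcong
  have hHltp : (H i₀.toNat : ℤ) < (p:ℤ) := by exact_mod_cast hHlt i₀.toNat hipn
  have hHnn : (0:ℤ) ≤ (H i₀.toNat : ℤ) := Int.natCast_nonneg _
  -- the residue
  set r : ℤ := (H 0 : ℤ) - i₀ * |n| + p with hr
  have hr1 : (p:ℤ) - |n| ≤ r := by simp only [hr]; linarith
  have hr2 : r ≤ (p:ℤ) - 1 := by simp only [hr]; linarith
  have hrcong : r ≡ (H 0 : ℤ) + i₀ * n [ZMOD p] := by
    have : r = (H 0 : ℤ) + i₀ * n + p := by rw [hr, hm]; ring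
    rw [this]
    simpa using (Int.ModEq.refl ((H 0 : ℤ) + i₀ * n)).add_right (p:ℤ) |>.symm.trans
      (Int.ModEq.symm (Int.modEq_iff_dvd.mpr ⟨-1, by ring⟩))
  have hHr : (H i₀.toNat : ℤ) = r := by
    have h := hcong.trans hrcong.symm
    have h1 : (H i₀.toNat : ℤ) % p = r % p := h
    rw [Int.emod_eq_of_lt hHnn hHltp, Int.emod_eq_of_lt (by linarith) (by linarith)] at h1
    exact h1
  have hHC : (C:ℤ) ≤ (H i₀.toNat : ℤ) := by rw [hHr]; linarith
  refine ⟨hHC, hiC, ?_⟩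
  intro hall
  have := (hall i₀.toNat hipn).mpr (by omega)
  omega
end

section
/- Let p be a positive integer, 2 ≤ C ≤ p-2, and H : {0,...,p-1} → {0,...,p-1} with H(i) ≡ H(0) + in (mod p). Define Ĥ(i) = [H(i + C) - C]_p (indices mod p). Then the condition (H(i) < C ⟺ i < C for all i) holds if and only if (Ĥ(i) < p - C ⟺ i < p - C for all i), and Ĥ(i) ≡ Ĥ(0) + in (mod p). -/
/-!
Write `j = (i + C) % p`. As `H j < p`, the residue `Ĥ i` is `H j - C` or `H j - C + p` according
as `C ≤ H j` or not, so `Ĥ i < p - C ↔ C ≤ H j`; likewise `i < p - C ↔ C ≤ j`. Since `i ↦ j`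
permutes `{0, …, p - 1}`, both conditions say `H j < C ↔ j < C` for all `j`. The affine law
follows from `Ĥ i ≡ H 0 + (i + C) n - C (mod p)`.
-/

theorem forall_lt_iff_forall_lt_add_mod {p C : ℕ} (hp : 0 < p) (hCp : C ≤ p) (P : ℕ → Prop) :
    (∀ j < p, P j) ↔ ∀ i < p, P ((i + C) % p) := by
  refine ⟨fun h i _ => h _ (Nat.mod_lt _ hp), fun h j hj => ?_⟩
  have hperiod : ((j + (p - C)) % p + C) % p = j := by
    rw [Nat.mod_add_mod, show j + (p - C) + C = j + p by omega, Nat.add_mod_right,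
      Nat.mod_eq_of_lt hj]
  simpa only [hperiod] using h ((j + (p - C)) % p) (Nat.mod_lt _ hp)

theorem lt_sub_iff_le_add_mod {p C i : ℕ} (hi : i < p) (hCp : C ≤ p) :
    i < p - C ↔ C ≤ (i + C) % p := by
  rcases lt_or_ge i (p - C) with h | h
  · rw [Nat.mod_eq_of_lt (by omega : i + C < p)]
    omega
  · rw [Nat.mod_eq_sub_mod (by omega : p ≤ i + C), Nat.mod_eq_of_lt (by omega : i + C - p < p)]
    omega

theorem toNat_emod_sub_lt_sub_iff {p C h : ℕ} (hh : h < p) (hCp : C ≤ p) :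
    (((h : ℤ) - C) % p).toNat < p - C ↔ C ≤ h := by
  rcases le_or_gt C h with hCh | hhC
  · rw [Int.emod_eq_of_lt (by omega) (by omega)]
    omega
  · rw [← Int.add_emod_right, Int.emod_eq_of_lt (by omega) (by omega)]
    omega

theorem toNat_emod_modEq {p : ℕ} (hp : 0 < p) (x : ℤ) : ((x % p).toNat : ℤ) ≡ x [ZMOD p] := by
  rw [Int.toNat_of_nonneg (Int.emod_nonneg _ (by omega))]
  exact Int.mod_modEq x p

theorem modEq_add_mul_of_modEq_add_mul {p : ℕ} (hp : 0 < p) {g : ℕ → ℤ} {b n : ℤ}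
    (h : ∀ i < p, g i ≡ b + i * n [ZMOD p]) : ∀ i < p, g i ≡ g 0 + i * n [ZMOD p] := by
  intro i hi
  have h0 : g 0 ≡ b [ZMOD p] := by simpa using h 0 hp
  exact (h i hi).trans (h0.symm.add_right _)

theorem stmt_17_general (p : ℕ) (hp : 0 < p) (C : ℕ) (hC' : C ≤ p - 2)
    (H : ℕ → ℕ) (n : ℤ) (hHlt : ∀ i < p, H i < p)
    (hHcong : ∀ i < p, (H i : ℤ) ≡ (H 0 : ℤ) + i * n [ZMOD p]) :
    let Hhat : ℕ → ℕ := fun i => (((H ((i + C) % p) : ℤ) - (C : ℤ)) % (p : ℤ)).toNat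
    ((∀ i < p, (H i < C ↔ i < C)) ↔ (∀ i < p, (Hhat i < p - C ↔ i < p - C))) ∧
    (∀ i < p, (Hhat i : ℤ) ≡ (Hhat 0 : ℤ) + i * n [ZMOD p]) := by
  intro Hhat
  have hCp : C ≤ p := by omega
  refine ⟨?_, ?_⟩
  · rw [forall_lt_iff_forall_lt_add_mod hp hCp (fun j => H j < C ↔ j < C)]
    refine forall₂_congr fun i hi => ?_
    rw [toNat_emod_sub_lt_sub_iff (hHlt _ (Nat.mod_lt _ hp)) hCp, lt_sub_iff_le_add_mod hi hCp,
      ← not_lt, ← not_lt, not_iff_not]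
  · refine modEq_add_mul_of_modEq_add_mul hp (b := H 0 + C * n - C) fun i hi => ?_
    have hshift : (((i + C) % p : ℕ) : ℤ) ≡ i + C [ZMOD p] := by
      exact_mod_cast Int.natCast_modEq_iff.mpr (Nat.mod_modEq (i + C) p)
    calc (Hhat i : ℤ) ≡ H ((i + C) % p) - C [ZMOD p] := toNat_emod_modEq hp _
      _ ≡ H 0 + ((i + C) % p : ℕ) * n - C [ZMOD p] := (hHcong _ (Nat.mod_lt _ hp)).sub_right _
      _ ≡ H 0 + (i + C) * n - C [ZMOD p] := ((hshift.mul_right n).add_left _).sub_right _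
      _ = H 0 + C * n - C + i * n := by ring

/-- Reduction step: with `Ĥ i = [H ((i + C) % p) - C]_p`, the condition
`(H i < C ↔ i < C)` for all `i < p` holds iff `(Ĥ i < p - C ↔ i < p - C)` for
all `i < p`, and `Ĥ` is again affine mod `p` with the same slope `n`. -/
theorem stmt_17 (p : ℕ) (hp : 0 < p) (C : ℕ) (hC : 2 ≤ C) (hC' : C ≤ p - 2)
    (H : ℕ → ℕ) (n : ℤ) (hHlt : ∀ i < p, H i < p)
    (hHcong : ∀ i < p, (H i : ℤ) ≡ (H 0 : ℤ) + i * n [ZMOD p]) :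
    let Hhat : ℕ → ℕ := fun i => (((H ((i + C) % p) : ℤ) - (C : ℤ)) % (p : ℤ)).toNat
    ((∀ i < p, (H i < C ↔ i < C)) ↔ (∀ i < p, (Hhat i < p - C ↔ i < p - C))) ∧
    (∀ i < p, (Hhat i : ℤ) ≡ (Hhat 0 : ℤ) + i * n [ZMOD p]) :=
  stmt_17_general p hp C hC' H n hHlt hHcong
end
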